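/- arXiv:1505.06096 — 5 statements merged into one kernel-verified Lean document; each statement's English description precedes it below -/
import Mathlib

section
/- The induced matching number of the whiskered cycle W(C_n) equals ⌈(n-1)/2⌉. -/
/-- The whiskered cycle `W(C_n)`. -/
def whiskerCycle (n : ℕ) [NeZero n] : SimpleGraph (Fin n ⊕ Fin n) :=
  SimpleGraph.fromRel (fun a b =>
    (∃ i : Fin n, a = Sum.inl i ∧ b = Sum.inl (i + 1)) ∨
    (∃ i : Fin n, a = Sum.inl i ∧ b = Sum.inr i))

/-- A set of edges is an induced matching if no two distinct edges of it share
a vertex and no edge of the graph joins endpoints of two distinct edges of it. -/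
def IsInducedMatching {V : Type*} (G : SimpleGraph V) (M : Set (Sym2 V)) : Prop :=
  M ⊆ G.edgeSet ∧
    ∀ e ∈ M, ∀ f ∈ M, e ≠ f → ∀ u ∈ e, ∀ v ∈ f, u ≠ v ∧ ¬ G.Adj u v

/-!
Every edge of `W(C_n)` contains a cycle vertex `x_i`. Choosing one such vertex per edge of an
induced matching `M` gives indices `i` such that no chosen index is the successor of another,
so the chosen indices and their successors are `2 |M|` distinct elements of `ℤ/n`, whence
`|M| ≤ ⌊n/2⌋`. Conversely, the whiskers at the even indices `0, 2, …, 2(⌊n/2⌋ - 1)` form an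
induced matching, and `⌈(n-1)/2⌉ = ⌊n/2⌋`.
-/

open Function Sum

theorem Nat.ceil_sub_one_div_two_eq (n : ℕ) : ⌈((n : ℚ) - 1) / 2⌉₊ = n / 2 := by
  obtain ⟨k, rfl | rfl⟩ := Nat.even_or_odd' n
  · obtain rfl | hk := k.eq_zero_or_pos
    · norm_num
    rw [Nat.ceil_eq_iff (by omega)]
    push_cast [Nat.mul_div_cancel_left k two_pos, Nat.cast_sub hk]
    constructor <;> linarith
  · have : (((2 * k + 1 : ℕ) : ℚ) - 1) / 2 = k := by push_cast; ring
    rw [this, Nat.ceil_natCast]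
    omega

theorem Fin.add_one_ne_self {n : ℕ} [NeZero n] (hn : 2 ≤ n) (i : Fin n) : i + 1 ≠ i := by
  rw [Ne, add_eq_left, Fin.ext_iff, Fin.val_one', Fin.val_zero, Nat.mod_eq_of_lt hn]
  omega

theorem two_mul_natCard_le_of_injective {ι G : Type*} [Finite G] [Add G] [IsRightCancelAdd G]
    {c : ι → G} (hc : Injective c) {a : G} (hca : ∀ x y, c x ≠ c y + a) :
    2 * Nat.card ι ≤ Nat.card G := by
  have : Finite ι := Finite.of_injective c hc
  have hinj : Injective (Sum.elim c (c · + a)) :=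
    hc.sumElim ((add_left_injective a).comp hc) hca
  simpa [Nat.card_sum, two_mul] using Nat.card_le_card_of_injective _ hinj

theorem IsInducedMatching.eq_of_eq_or_adj {V : Type*} {G : SimpleGraph V} {M : Set (Sym2 V)}
    (hM : IsInducedMatching G M) {e f : Sym2 V} (he : e ∈ M) (hf : f ∈ M) {u v : V}
    (hu : u ∈ e) (hv : v ∈ f) (huv : u = v ∨ G.Adj u v) : e = f := by
  by_contra hef
  obtain ⟨hne, hnadj⟩ := hM.2 e he f hf hef u hu v hv
  exact huv.elim hne hnadj

namespace whiskerCycle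

variable {n : ℕ}

/-- The whisker `x_i x_{n+i}`. -/
def whisker (i : Fin n) : Sym2 (Fin n ⊕ Fin n) := s(inl i, inr i)

theorem whisker_injective : Injective (whisker (n := n)) := by
  intro i j h
  simpa [whisker, Sym2.eq_iff] using h

def evenIndex (k : Fin (n / 2)) : Fin n := ⟨2 * k, by omega⟩

theorem evenIndex_injective : Injective (evenIndex (n := n)) := by
  intro k l h
  simpa [evenIndex, Fin.ext_iff] using h

theorem ncard_whiskers_evenIndex : (whisker '' Set.range (evenIndex (n := n))).ncard = n / 2 := by
  rw [Set.ncard_image_of_injective _ whisker_injective,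
    Set.ncard_range_of_injective evenIndex_injective, Nat.card_eq_fintype_card, Fintype.card_fin]

variable [NeZero n]

theorem adj_inl_inl {i j : Fin n} :
    (whiskerCycle n).Adj (inl i) (inl j) ↔ i ≠ j ∧ (j = i + 1 ∨ i = j + 1) := by
  simp [whiskerCycle, SimpleGraph.fromRel_adj]

theorem adj_inl_inr {i j : Fin n} : (whiskerCycle n).Adj (inl i) (inr j) ↔ i = j := by
  simp [whiskerCycle, SimpleGraph.fromRel_adj, eq_comm]

theorem not_adj_inr_inr {i j : Fin n} : ¬ (whiskerCycle n).Adj (inr i) (inr j) := by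
  simp [whiskerCycle, SimpleGraph.fromRel_adj]

theorem adj_inl_inl_add_one (hn : 2 ≤ n) (i : Fin n) :
    (whiskerCycle n).Adj (inl i) (inl (i + 1)) :=
  adj_inl_inl.2 ⟨(Fin.add_one_ne_self hn i).symm, .inl rfl⟩

theorem exists_inl_mem_of_mem_edgeSet {e : Sym2 (Fin n ⊕ Fin n)}
    (he : e ∈ (whiskerCycle n).edgeSet) : ∃ i, inl i ∈ e := by
  induction e with
  | _ a b =>
    obtain ⟨-, (⟨i, rfl, -⟩ | ⟨i, rfl, -⟩) | (⟨i, rfl, -⟩ | ⟨i, rfl, -⟩)⟩ := he <;>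
      exact ⟨i, by simp⟩

theorem two_mul_ncard_le_of_isInducedMatching (hn : 2 ≤ n) {M : Set (Sym2 (Fin n ⊕ Fin n))}
    (hM : IsInducedMatching (whiskerCycle n) M) : 2 * M.ncard ≤ n := by
  choose c hc using fun e : M => exists_inl_mem_of_mem_edgeSet (hM.1 e.2)
  have hc_inj : Injective c := fun e f hef =>
    Subtype.ext (hM.eq_of_eq_or_adj e.2 f.2 (hc e) (hc f) (.inl (congrArg inl hef)))
  have hc_succ : ∀ e f, c e ≠ c f + 1 := by
    intro e f hef
    obtain rfl : f = e := Subtype.ext <| hM.eq_of_eq_or_adj f.2 e.2 (hc f) (hc e)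
      (.inr (hef ▸ adj_inl_inl_add_one hn (c f)))
    exact Fin.add_one_ne_self hn (c f) hef.symm
  simpa [Nat.card_coe_set_eq] using two_mul_natCard_le_of_injective hc_inj hc_succ

theorem isInducedMatching_image_whisker {T : Set (Fin n)}
    (hT : ∀ i ∈ T, ∀ j ∈ T, j ≠ i + 1) :
    IsInducedMatching (whiskerCycle n) (whisker '' T) := by
  refine ⟨?_, ?_⟩
  · rintro _ ⟨i, -, rfl⟩
    exact adj_inl_inr.2 rfl
  rintro _ ⟨i, hi, rfl⟩ _ ⟨j, hj, rfl⟩ hij u hu v hv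
  replace hij : i ≠ j := fun h => hij (h ▸ rfl)
  simp only [whisker, Sym2.mem_iff] at hu hv
  rcases hu with rfl | rfl <;> rcases hv with rfl | rfl
  · simp [adj_inl_inl, hij, hT i hi j hj, hT j hj i hi]
  · simpa [adj_inl_inr] using hij
  · simpa [(whiskerCycle n).adj_comm, adj_inl_inr] using hij.symm
  · exact ⟨by simpa using hij, not_adj_inr_inr⟩

theorem evenIndex_ne_evenIndex_add_one (k l : Fin (n / 2)) :
    (evenIndex l : Fin n) ≠ evenIndex k + 1 := by
  have hk : (evenIndex k : ℕ) + 1 < n := by simp [evenIndex]; omega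
  rw [Ne, Fin.ext_iff, Fin.val_add_one_of_lt' hk]
  simp [evenIndex]
  omega

theorem isInducedMatching_whiskers_evenIndex :
    IsInducedMatching (whiskerCycle n) (whisker '' Set.range evenIndex) := by
  apply isInducedMatching_image_whisker
  rintro _ ⟨k, rfl⟩ _ ⟨l, rfl⟩
  exact evenIndex_ne_evenIndex_add_one k l

end whiskerCycle

/-- the induced matching number of `W(C_n)` equals `⌈(n-1)/2⌉`. -/
theorem indmatch_whiskerCycle (n : ℕ) [NeZero n] (hn : 3 ≤ n) :
    IsGreatest {k : ℕ | ∃ M : Set (Sym2 (Fin n ⊕ Fin n)),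
        IsInducedMatching (whiskerCycle n) M ∧ M.ncard = k}
      ⌈((n : ℚ) - 1) / 2⌉₊ := by
  rw [Nat.ceil_sub_one_div_two_eq]
  refine ⟨⟨_, whiskerCycle.isInducedMatching_whiskers_evenIndex,
    whiskerCycle.ncard_whiskers_evenIndex⟩, ?_⟩
  rintro _ ⟨M, hM, rfl⟩
  have := whiskerCycle.two_mul_ncard_le_of_isInducedMatching (by omega) hM
  omega
end

section
/- Let G be a graph with edge ideal I = I(G), and let M = e_1⋯e_s be a product of edge-monomials of G. If u and v are even-connected with respect to M, i.e., there is a walk p_0 = u, p_1, ..., p_{2l+1} = v in G (l ≥ 1) such that for each 0 ≤ k ≤ l-1 the edge {p_{2k+1}, p_{2k+2}} equals some e_i, and each e_i is used at most as many times as it appears among e_1,...,e_s, then uv·M ∈ I^{s+1}, i.e., uv ∈ (I^{s+1} : M). -/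
open MvPolynomial

/-- The edge ideal of a graph `G`. -/
noncomputable def edgeIdeal (K : Type*) [Field K] {V : Type*} (G : SimpleGraph V) :
    Ideal (MvPolynomial V K) :=
  Ideal.span {m | ∃ u v, G.Adj u v ∧ m = X u * X v}

/-- `p` is an even-connected walk from `u` to `v` with respect to the `s`-fold
product of edges `e_1 ⋯ e_s`: it has odd length `2l+1` with `l ≥ 1`, each edge
in an odd position is some `e_i`, and each `e_i` is used at most as many times
as it occurs among `e_1, …, e_s`. -/
def IsEvenConnectedWalk {V : Type*} (G : SimpleGraph V) {s : ℕ}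
    (e : Fin s → V × V) (u v : V) (l : ℕ) (p : ℕ → V) : Prop :=
  1 ≤ l ∧ p 0 = u ∧ p (2 * l + 1) = v ∧
  (∀ k < 2 * l + 1, G.Adj (p k) (p (k + 1))) ∧
  (∀ k < l, ∃ i : Fin s, s(p (2 * k + 1), p (2 * k + 2)) = s((e i).1, (e i).2)) ∧
  (∀ i : Fin s,
    {k | k < l ∧ s(p (2 * k + 1), p (2 * k + 2)) = s((e i).1, (e i).2)}.ncard ≤
      {j : Fin s | s((e j).1, (e j).2) = s((e i).1, (e i).2)}.ncard)

/-- `u` and `v` are even-connected with respect to `e_1 ⋯ e_s`. -/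
def EvenConnected {V : Type*} (G : SimpleGraph V) {s : ℕ}
    (e : Fin s → V × V) (u v : V) : Prop :=
  ∃ l p, IsEvenConnectedWalk G e u v l p

/-!
Let `p₀ = u, p₁, …, p_{2l+1} = v` be the walk. By the multiplicity condition, its odd-position
edges `p_{2k+1} p_{2k+2}` form a submultiset `W` of the edges `e₁, …, e_s`, so `M = (∏ W) · M'`
with `M'` a product of `s - l` edges. Regrouping the vertices of the walk into the consecutive
pairs `p_{2k} p_{2k+1}` gives `uv · ∏ W = ∏_{k ≤ l} p_{2k} p_{2k+1}`, a product of `l + 1`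
edges. Hence `uv · M` is a product of `s + 1` edges.
-/

theorem Ideal.multiset_prod_mem_pow {R : Type*} [CommSemiring R] (I : Ideal R)
    (t : Multiset R) (h : ∀ x ∈ t, x ∈ I) : t.prod ∈ I ^ Multiset.card t := by
  induction t using Multiset.induction with
  | empty => simp
  | cons a t ih =>
    rw [Multiset.prod_cons, Multiset.card_cons, pow_succ']
    exact Ideal.mul_mem_mul (h a (Multiset.mem_cons_self a t))
      (ih fun x hx => h x (Multiset.mem_cons_of_mem hx))

theorem Finset.prod_range_succ_pairs {M : Type*} [CommMonoid M] (f : ℕ → M) (l : ℕ) :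
    f 0 * f (2 * l + 1) * ∏ k ∈ Finset.range l, f (2 * k + 1) * f (2 * k + 2) =
      ∏ k ∈ Finset.range (l + 1), f (2 * k) * f (2 * k + 1) := by
  induction l with
  | zero => simp
  | succ l ih =>
    rw [Finset.prod_range_succ, Finset.prod_range_succ _ (l + 1), ← ih,
      show 2 * (l + 1) = 2 * l + 2 by ring]
    ac_rfl

theorem Multiset.count_map_eq_ncard {α β : Type*} [DecidableEq β] (S : Finset α) (f : α → β)
    (b : β) : (S.val.map f).count b = {a | a ∈ S ∧ f a = b}.ncard := by
  rw [Multiset.count_map, ← Finset.filter_val, ← Finset.card_def, ← Set.ncard_coe_finset]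
  congr 1
  ext a
  simp [eq_comm]

section EdgeIdeal

variable {V : Type*}

noncomputable def edgeMonomial (R : Type*) [CommSemiring R] : Sym2 V → MvPolynomial V R :=
  Sym2.lift ⟨fun a b => X a * X b, fun _ _ => mul_comm _ _⟩

@[simp]
theorem edgeMonomial_mk (R : Type*) [CommSemiring R] (a b : V) :
    edgeMonomial R s(a, b) = X a * X b :=
  rfl

theorem edgeMonomial_mem_edgeIdeal (K : Type*) [Field K] {G : SimpleGraph V} {z : Sym2 V}
    (hz : z ∈ G.edgeSet) : edgeMonomial K z ∈ edgeIdeal K G := by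
  induction z using Sym2.ind with
  | h a b => exact Ideal.subset_span ⟨a, b, hz, rfl⟩

theorem prod_edgeMonomial_mem_edgeIdeal_pow (K : Type*) [Field K] {G : SimpleGraph V}
    {t : Multiset (Sym2 V)} (ht : ∀ z ∈ t, z ∈ G.edgeSet) :
    (t.map (edgeMonomial K)).prod ∈ edgeIdeal K G ^ Multiset.card t := by
  rw [← Multiset.card_map (edgeMonomial K)]
  refine Ideal.multiset_prod_mem_pow _ _ fun x hx => ?_
  obtain ⟨z, hz, rfl⟩ := Multiset.mem_map.mp hx
  exact edgeMonomial_mem_edgeIdeal K (ht z hz)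

end EdgeIdeal

section Walk

variable {V : Type*} {G : SimpleGraph V} {s : ℕ} {e : Fin s → V × V} {u v : V} {l : ℕ}
  {p : ℕ → V}

def edgeMultiset {s : ℕ} (e : Fin s → V × V) : Multiset (Sym2 V) :=
  Finset.univ.val.map fun i => s((e i).1, (e i).2)

def oddEdges (p : ℕ → V) (l : ℕ) : Multiset (Sym2 V) :=
  (Finset.range l).val.map fun k => s(p (2 * k + 1), p (2 * k + 2))

def pairEdges (p : ℕ → V) (l : ℕ) : Multiset (Sym2 V) :=
  (Finset.range (l + 1)).val.map fun k => s(p (2 * k), p (2 * k + 1))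

@[simp]
theorem card_edgeMultiset (e : Fin s → V × V) : Multiset.card (edgeMultiset e) = s := by
  simp [edgeMultiset]

@[simp]
theorem card_oddEdges (p : ℕ → V) (l : ℕ) : Multiset.card (oddEdges p l) = l := by
  simp [oddEdges]

@[simp]
theorem card_pairEdges (p : ℕ → V) (l : ℕ) : Multiset.card (pairEdges p l) = l + 1 := by
  simp [pairEdges]

theorem edgeMultiset_subset_edgeSet (he : ∀ i, G.Adj (e i).1 (e i).2) :
    ∀ z ∈ edgeMultiset e, z ∈ G.edgeSet := by
  intro z hz
  obtain ⟨i, -, rfl⟩ := Multiset.mem_map.mp hz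
  exact he i

theorem prod_edgeMultiset (R : Type*) [CommSemiring R] (e : Fin s → V × V) :
    ((edgeMultiset e).map (edgeMonomial R)).prod = ∏ i, X (e i).1 * X (e i).2 := by
  rw [edgeMultiset, Multiset.map_map, Finset.prod_map_val]
  rfl

theorem IsEvenConnectedWalk.oddEdges_le (hp : IsEvenConnectedWalk G e u v l p) :
    oddEdges p l ≤ edgeMultiset e := by
  classical
  obtain ⟨-, -, -, -, hodd, hcount⟩ := hp
  refine Multiset.le_iff_count.mpr fun c => ?_
  by_cases hc : c ∈ oddEdges p l
  · obtain ⟨k, hk, rfl⟩ := Multiset.mem_map.mp hc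
    obtain ⟨i, hi⟩ := hodd k (Finset.mem_range.mp hk)
    rw [oddEdges, edgeMultiset, Multiset.count_map_eq_ncard, Multiset.count_map_eq_ncard, hi]
    simpa only [Finset.mem_range, Finset.mem_univ, true_and] using hcount i
  · simp [Multiset.count_eq_zero_of_notMem hc]

theorem IsEvenConnectedWalk.pairEdges_subset_edgeSet (hp : IsEvenConnectedWalk G e u v l p) :
    ∀ z ∈ pairEdges p l, z ∈ G.edgeSet := by
  obtain ⟨-, -, -, hadj, -⟩ := hp
  intro z hz
  obtain ⟨k, hk, rfl⟩ := Multiset.mem_map.mp hz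
  exact hadj (2 * k) (by have := Finset.mem_range.mp hk; omega)

theorem IsEvenConnectedWalk.prod_pairEdges (R : Type*) [CommSemiring R]
    (hp : IsEvenConnectedWalk G e u v l p) :
    ((pairEdges p l).map (edgeMonomial R)).prod =
      X u * X v * ((oddEdges p l).map (edgeMonomial R)).prod := by
  obtain ⟨-, rfl, rfl, -⟩ := hp
  simp only [pairEdges, oddEdges, Multiset.map_map, Function.comp_def, edgeMonomial_mk,
    Finset.prod_map_val]
  exact (Finset.prod_range_succ_pairs (fun k => X (R := R) (p k)) l).symm

end Walk

/-- if `u` and `v` are even-connected with respect to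
`M = e_1 ⋯ e_s`, then `uv·M ∈ I^{s+1}`. -/
theorem evenConnected_mem_pow {V K : Type*} [Field K] (G : SimpleGraph V)
    (s : ℕ) (e : Fin s → V × V) (he : ∀ i, G.Adj (e i).1 (e i).2)
    (M : MvPolynomial V K) (hM : M = ∏ i, X (e i).1 * X (e i).2)
    (u v : V) (huv : EvenConnected G e u v) :
    X u * X v * M ∈ edgeIdeal K G ^ (s + 1) := by
  classical
  obtain ⟨l, p, hp⟩ := huv
  have hle := hp.oddEdges_le
  have hls : l ≤ s := by simpa using Multiset.card_le_card hle
  have hcard : Multiset.card (pairEdges p l + (edgeMultiset e - oddEdges p l)) = s + 1 := by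
    rw [Multiset.card_add, Multiset.card_sub hle, card_pairEdges, card_oddEdges,
      card_edgeMultiset]
    omega
  have hedges : ∀ z ∈ pairEdges p l + (edgeMultiset e - oddEdges p l), z ∈ G.edgeSet :=
    fun z hz => (Multiset.mem_add.mp hz).elim (hp.pairEdges_subset_edgeSet z) fun hz =>
      edgeMultiset_subset_edgeSet he z (Multiset.mem_of_le (Multiset.sub_le_self _ _) hz)
  rw [hM, ← prod_edgeMultiset, ← add_tsub_cancel_of_le hle,
    Multiset.map_add, Multiset.prod_add, ← mul_assoc, ← hp.prod_pairEdges K,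
    ← Multiset.prod_add, ← Multiset.map_add, ← hcard]
  exact prod_edgeMonomial_mem_edgeIdeal_pow K hedges
end

section
/- Let n = 2m+1 be odd, G = W(C_n) the whiskered cycle, and I = I(G) its edge ideal. If M = (x_1x_2)(x_3x_4)⋯(x_{2m-1}x_{2m})·N for some N ∈ I^{s-m} (with 1 ≤ m ≤ s), then x_n^2 · M ∈ I^{s+1}. -/
open MvPolynomial
open Fin.NatCast

/-!
The monomial `x_n · (x_1x_2)(x_3x_4)⋯(x_{2m-1}x_{2m})` equals
`(x_2x_3)(x_4x_5)⋯(x_{2m}x_{2m+1}) · x_1`, i.e. shifting the matching one step around the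
odd cycle frees `x_1`. Multiplying by the second `x_n` turns `x_n x_1` into one more edge, so
`x_n^2 M` is a product of `m + 1` edges and `N ∈ I^{s-m}`.
-/

theorem Ideal.prod_range_mem_pow {R : Type*} [CommSemiring R] {I : Ideal R} {f : ℕ → R}
    (h : ∀ t, f t ∈ I) (m : ℕ) : ∏ t ∈ Finset.range m, f t ∈ I ^ m := by
  simpa using Ideal.prod_mem_prod (s := Finset.range m) (I := fun _ => I) fun t _ => h t

theorem Finset.prod_range_pairs {M : Type*} [CommMonoid M] (f : ℕ → M) (m : ℕ) :
    ∏ t ∈ Finset.range m, f (2 * t) * f (2 * t + 1) = ∏ i ∈ Finset.range (2 * m), f i := by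
  induction m with
  | zero => simp
  | succ m ih =>
    rw [Finset.prod_range_succ, ih, Nat.mul_succ, Finset.prod_range_succ,
      Finset.prod_range_succ, mul_assoc]

theorem Finset.prod_range_shifted_pairs_mul {M : Type*} [CommMonoid M] (f : ℕ → M) (m : ℕ) :
    (∏ t ∈ Finset.range m, f (2 * t + 1) * f (2 * t + 2)) * f 0 =
      (∏ t ∈ Finset.range m, f (2 * t) * f (2 * t + 1)) * f (2 * m) := by
  rw [Finset.prod_range_pairs, ← Finset.prod_range_succ, Finset.prod_range_succ',
    ← Finset.prod_range_pairs (fun i => f (i + 1))]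

theorem X_mul_X_mem_edgeIdeal (K : Type*) [Field K] {V : Type*} {G : SimpleGraph V} {u v : V}
    (h : G.Adj u v) : X u * X v ∈ edgeIdeal K G :=
  Ideal.subset_span ⟨u, v, h, rfl⟩

theorem whiskerCycle_adj_succ {n : ℕ} [NeZero n] (hn : 1 < n) (k : ℕ) :
    (whiskerCycle n).Adj (Sum.inl (k : Fin n)) (Sum.inl ((k + 1 : ℕ) : Fin n)) := by
  have hone : (1 : Fin n) ≠ 0 := by simp [Fin.ext_iff, Nat.mod_eq_of_lt hn]
  rw [whiskerCycle, SimpleGraph.fromRel_adj, Nat.cast_succ]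
  exact ⟨by simpa using hone, Or.inl (Or.inl ⟨k, rfl, rfl⟩)⟩

/-- for `n = 2m+1` odd, `1 ≤ m ≤ s`, if
`M = (x_1x_2)(x_3x_4)⋯(x_{2m-1}x_{2m})·N` with `N ∈ I^{s-m}`, then
`x_n^2 · M ∈ I^{s+1}`.  (Here `x_j = X (Sum.inl (j-1))`.) -/
theorem xn_sq_mul_mem (K : Type*) [Field K] (n m s : ℕ) [NeZero n]
    (hn : n = 2 * m + 1) (hm : 1 ≤ m) (hms : m ≤ s)
    (N M : MvPolynomial (Fin n ⊕ Fin n) K)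
    (hN : N ∈ edgeIdeal K (whiskerCycle n) ^ (s - m))
    (hM : M = (∏ t ∈ Finset.range m,
        X (Sum.inl ((2 * t : ℕ) : Fin n)) * X (Sum.inl ((2 * t + 1 : ℕ) : Fin n))) * N) :
    X (Sum.inl ((n - 1 : ℕ) : Fin n)) ^ 2 * M ∈
      edgeIdeal K (whiskerCycle n) ^ (s + 1) := by
  subst hn hM
  set f : ℕ → MvPolynomial (Fin (2 * m + 1) ⊕ Fin (2 * m + 1)) K :=
    fun i => X (Sum.inl (i : Fin (2 * m + 1)))
  have edge (k : ℕ) : f k * f (k + 1) ∈ edgeIdeal K (whiskerCycle (2 * m + 1)) :=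
    X_mul_X_mem_edgeIdeal K (whiskerCycle_adj_succ (by omega) k)
  have hwrap : f (2 * m + 1) = f 0 := by simp [f]
  have hrepack : f (2 * m) ^ 2 * ((∏ t ∈ Finset.range m, f (2 * t) * f (2 * t + 1)) * N) =
      (∏ t ∈ Finset.range m, f (2 * t + 1) * f (2 * t + 2)) *
        (f (2 * m) * f (2 * m + 1)) * N := by
    rw [hwrap]
    linear_combination (-(f (2 * m) * N)) * Finset.prod_range_shifted_pairs_mul f m
  rw [show 2 * m + 1 - 1 = 2 * m by omega, hrepack, ← show m + 1 + (s - m) = s + 1 by omega,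
    pow_add, pow_succ]
  exact Ideal.mul_mem_mul (Ideal.mul_mem_mul
    (Ideal.prod_range_mem_pow (fun t => edge (2 * t + 1)) m) (edge (2 * m))) hN
end

section
/- Let G = W(C_n) with edge ideal I, and let M be a minimal monomial generator of I^s. If x_n^2 · M ∈ I^{s+1}, then n is odd, say n = 2m+1 with 1 ≤ m ≤ s, and M = (x_1x_2)(x_3x_4)⋯(x_{2m-1}x_{2m})·N for some N ∈ I^{s-m}. -/
/-!
Since `I ^ (s + 1)` is a monomial ideal, `x_n ^ 2 * M` is a product of `s + 1` edges `B`, while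
`M` is a product of `s` edges `R`. Comparing vertex multiplicities, the edges of `B` and `R` can be
peeled off alternately into a closed walk at `x_n` of odd length whose even-numbered steps lie in
`B` and whose odd-numbered steps lie in `R`.

Lift this walk to the universal cover `ℤ` of the cycle, whisker edges not moving. The total
winding `D` is a multiple of `n`, and since every step changes the winding plus the whisker parity
by `±1`, `D` has the parity of the walk length, so it is odd. Hence `n = 2m + 1` and `|D| ≥ n`:
the lift crosses each edge `x_{2t+1} x_{2t+2}`, `t < m`, and the parity invariant forces that
crossing to be an odd-numbered step, i.e. an edge of `R`.
-/

open MvPolynomial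
open Fin.NatCast

@[simp]
lemma Sym2.toMultiset_mk {α : Type*} (a b : α) : s(a, b).toMultiset = {a, b} := rfl

theorem exists_eq_and_succ_eq_of_le_of_lt {f : ℕ → ℤ} {L : ℕ} {x : ℤ}
    (hf : ∀ j < L, f (j + 1) ≤ f j + 1) (h0 : f 0 ≤ x) (hL : x < f L) :
    ∃ j < L, f j = x ∧ f (j + 1) = x + 1 := by
  induction L with
  | zero => omega
  | succ L ih =>
    by_cases hx : x < f L
    · obtain ⟨j, hj, hfj⟩ := ih (fun j hj => hf j (by omega)) hx
      exact ⟨j, by omega, hfj⟩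
    · have := hf L (by omega)
      exact ⟨L, by omega, by omega, by omega⟩

theorem exists_alternating_walk {V : Type*} (R B : Multiset (Sym2 V)) (u v : V)
    (h : B.bind Sym2.toMultiset = u ::ₘ v ::ₘ R.bind Sym2.toMultiset) :
    ∃ (k : ℕ) (w : ℕ → V), w 0 = u ∧ w (2 * k + 1) = v ∧
      ∀ j < 2 * k + 1, s(w j, w (j + 1)) ∈ if Even j then B else R := by
  classical
  induction R using Multiset.strongInductionOn generalizing B u with
  | ih R ih =>
    obtain ⟨q, hqB, huq⟩ := Multiset.mem_bind.1 (h ▸ Multiset.mem_cons_self u _)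
    obtain ⟨u₁, rfl⟩ := Sym2.mem_iff_exists.1 (Sym2.mem_toMultiset.1 huq)
    rw [← Multiset.cons_erase hqB, Multiset.cons_bind, Sym2.toMultiset_mk,
      Multiset.insert_eq_cons, Multiset.cons_add, Multiset.cons_inj_right,
      Multiset.singleton_add] at h
    by_cases hv : u₁ = v
    · subst hv
      refine ⟨0, fun | 0 => u | _ => u₁, rfl, rfl, ?_⟩
      intro j hj
      obtain rfl : j = 0 := by omega
      simpa using hqB
    obtain ⟨r, hrR, hur⟩ := Multiset.mem_bind.1 <|
      (Multiset.mem_cons.1 (h ▸ Multiset.mem_cons_self u₁ _)).resolve_left hv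
    obtain ⟨u₂, rfl⟩ := Sym2.mem_iff_exists.1 (Sym2.mem_toMultiset.1 hur)
    rw [← Multiset.cons_erase hrR, Multiset.cons_bind, Sym2.toMultiset_mk,
      Multiset.insert_eq_cons, Multiset.cons_add, Multiset.cons_swap, Multiset.cons_inj_right,
      Multiset.singleton_add, Multiset.cons_swap] at h
    obtain ⟨k, w, hw0, hwv, hw⟩ := ih _ (Multiset.erase_lt.2 hrR) _ _ h
    refine ⟨k + 1, fun | 0 => u | 1 => u₁ | j + 2 => w j, rfl, hwv, ?_⟩
    rintro (_ | _ | j) hj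
    · simpa using hqB
    · simpa [hw0] using hrR
    · have hj' := hw j (by omega)
      have hpar : Even (j + 1 + 1) ↔ Even j := by simp [Nat.even_add_one]
      rw [if_congr hpar rfl rfl]
      split_ifs at hj' ⊢ <;> exact Multiset.mem_of_mem_erase hj'

section EdgeIdeal

variable {K : Type*} [Field K] {V : Type*} {G : SimpleGraph V}

lemma card_bind_toMultiset (B : Multiset (Sym2 V)) :
    (B.bind Sym2.toMultiset).card = 2 * B.card := by
  simp [Multiset.card_bind, Sym2.card_toMultiset, mul_comm]

lemma prod_map_X_eq_monomial [DecidableEq V] (d : Multiset V) :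
    (d.map X).prod = (monomial (Multiset.toFinsupp d) 1 : MvPolynomial V K) := by
  induction d using Multiset.induction with
  | empty => simp
  | cons a d ih =>
    rw [Multiset.map_cons, Multiset.prod_cons, ih, X, monomial_mul, one_mul,
      ← Multiset.toFinsupp_singleton, ← Multiset.toFinsupp_add, Multiset.singleton_add]

lemma prod_map_X_toMultiset_mk (a b : V) :
    (s(a, b).toMultiset.map X).prod = (X a * X b : MvPolynomial V K) := by
  simp

lemma prod_map_X_bind_toMultiset (B : Multiset (Sym2 V)) :
    ((B.bind Sym2.toMultiset).map X).prod =
      (B.map fun e => (e.toMultiset.map X).prod : Multiset (MvPolynomial V K)).prod := by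
  rw [Multiset.map_bind, Multiset.prod_bind]

lemma prod_mem_edgeIdeal_pow {B : Multiset (Sym2 V)} (hB : ∀ e ∈ B, e ∈ G.edgeSet) :
    ((B.bind Sym2.toMultiset).map X).prod ∈ edgeIdeal K G ^ B.card := by
  induction B using Multiset.induction with
  | empty => simp
  | cons e B ih =>
    obtain ⟨u, v⟩ := e
    rw [Multiset.cons_bind, Multiset.map_add, Multiset.prod_add, Multiset.card_cons, pow_succ']
    refine Ideal.mul_mem_mul
      (Ideal.subset_span ⟨u, v, hB _ (Multiset.mem_cons_self _ _), by simp⟩)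
      (ih fun e he => hB e (Multiset.mem_cons_of_mem he))

lemma edgeIdeal_pow_le_span (k : ℕ) :
    edgeIdeal K G ^ k ≤
      Ideal.span ((fun B : Multiset (Sym2 V) => ((B.bind Sym2.toMultiset).map X).prod) ''
        {B | B.card = k ∧ ∀ e ∈ B, e ∈ G.edgeSet}) := by
  induction k with
  | zero =>
    rw [pow_zero, Ideal.one_eq_top, top_le_iff, Ideal.eq_top_iff_one]
    exact Ideal.subset_span ⟨0, by simp⟩
  | succ k ih =>
    rw [pow_succ, edgeIdeal]
    refine (Ideal.mul_mono_left ih).trans ?_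
    rw [Ideal.span_mul_span']
    refine Ideal.span_mono (Set.mul_subset_iff.2 ?_)
    rintro _ ⟨B, ⟨hcard, hB⟩, rfl⟩ _ ⟨u, v, huv, rfl⟩
    refine ⟨s(u, v) ::ₘ B, ⟨by simp [hcard], ?_⟩, ?_⟩
    · simpa [or_imp, forall_and] using ⟨huv, hB⟩
    · rw [mul_comm]
      simp [mul_assoc]

lemma exists_edges_le_of_prod_X_mem_pow {d : Multiset V} {k : ℕ}
    (h : (d.map X).prod ∈ edgeIdeal K G ^ k) :
    ∃ B : Multiset (Sym2 V), B.card = k ∧ (∀ e ∈ B, e ∈ G.edgeSet) ∧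
      B.bind Sym2.toMultiset ≤ d := by
  classical
  have hmon : (fun B : Multiset (Sym2 V) => ((B.bind Sym2.toMultiset).map X).prod) =
      (fun f => monomial f (1 : K)) ∘ fun B => Multiset.toFinsupp (B.bind Sym2.toMultiset) :=
    funext fun B => prod_map_X_eq_monomial _
  have h' := edgeIdeal_pow_le_span k h
  rw [hmon, Set.image_comp, mem_ideal_span_monomial_image, prod_map_X_eq_monomial] at h'
  obtain ⟨_, ⟨B, ⟨hcard, hB⟩, rfl⟩, hle⟩ :=
    h' (Multiset.toFinsupp d) (by simp [support_monomial])
  exact ⟨B, hcard, hB, Finsupp.orderIsoMultiset.symm.le_iff_le.1 hle⟩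

lemma exists_edges_eq_of_sq_mul_mem_pow {R : Multiset (Sym2 V)} {z : V}
    (h : X z ^ 2 * ((R.bind Sym2.toMultiset).map X).prod ∈ edgeIdeal K G ^ (R.card + 1)) :
    ∃ B : Multiset (Sym2 V), (∀ e ∈ B, e ∈ G.edgeSet) ∧
      B.bind Sym2.toMultiset = z ::ₘ z ::ₘ R.bind Sym2.toMultiset := by
  have hz : (X z ^ 2 * ((R.bind Sym2.toMultiset).map X).prod : MvPolynomial V K) =
      ((z ::ₘ z ::ₘ R.bind Sym2.toMultiset).map X).prod := by
    simp [pow_two, mul_assoc]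
  rw [hz] at h
  obtain ⟨B, hBcard, hB, hBle⟩ := exists_edges_le_of_prod_X_mem_pow h
  refine ⟨B, hB, Multiset.eq_of_le_of_card_le hBle ?_⟩
  simp only [Multiset.card_cons, card_bind_toMultiset, hBcard]
  omega

end EdgeIdeal

namespace WhiskerCycle

def pathMatching (n m : ℕ) [NeZero n] : Multiset (Sym2 (Fin n ⊕ Fin n)) :=
  (Multiset.range m).map fun t => s(.inl ((2 * t : ℕ) : Fin n), .inl ((2 * t + 1 : ℕ) : Fin n))

variable {n : ℕ}

def cyclePos (v : Fin n ⊕ Fin n) : ZMod n := ((v.elim id id : Fin n) : ℕ)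

def whiskerParity (v : Fin n ⊕ Fin n) : ZMod 2 := v.elim 0 1

@[simp]
lemma whiskerParity_inl (i : Fin n) : whiskerParity (.inl i) = 0 := rfl

variable [NeZero n]

lemma adj_inl_inl {i j : Fin n} :
    (whiskerCycle n).Adj (.inl i) (.inl j) ↔ i ≠ j ∧ (j = i + 1 ∨ i = j + 1) := by
  simp [whiskerCycle]

lemma adj_inl_inr {i j : Fin n} : (whiskerCycle n).Adj (.inl i) (.inr j) ↔ i = j := by
  simp [whiskerCycle, eq_comm]

lemma not_adj_inr_inr (i j : Fin n) : ¬ (whiskerCycle n).Adj (.inr i) (.inr j) := by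
  simp [whiskerCycle]

def cycleStep : Fin n ⊕ Fin n → Fin n ⊕ Fin n → ℤ
  | .inl i, .inl j => if j = i + 1 then 1 else if i = j + 1 then -1 else 0
  | _, _ => 0

lemma cyclePos_inl_natCast (c : ℕ) : cyclePos (.inl (c : Fin n)) = c := by
  simp [cyclePos, Fin.val_natCast]

lemma cyclePos_inl_add_one (i : Fin n) : cyclePos (.inl (i + 1)) = cyclePos (.inl i) + 1 := by
  simp [cyclePos, Fin.val_add]

lemma inl_eq_natCast_of_cyclePos {i : Fin n} {c : ℕ} (h : cyclePos (.inl i) = c) : i = c := by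
  refine Fin.ext ?_
  rw [Fin.val_natCast, ← Nat.mod_eq_of_lt i.isLt]
  exact (ZMod.natCast_eq_natCast_iff' _ _ _).1 h

lemma abs_cycleStep_le_one (a b : Fin n ⊕ Fin n) : |cycleStep a b| ≤ 1 := by
  unfold cycleStep
  split <;> try split_ifs
  all_goals simp

lemma exists_inl_of_cycleStep_ne_zero {a b : Fin n ⊕ Fin n} (h : cycleStep a b ≠ 0) :
    ∃ i j, a = .inl i ∧ b = .inl j := by
  rcases a with i | i <;> rcases b with j | j
  · exact ⟨i, j, rfl, rfl⟩
  all_goals simp [cycleStep] at h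

lemma cyclePos_eq_add_cycleStep {a b : Fin n ⊕ Fin n} (h : (whiskerCycle n).Adj a b) :
    cyclePos b = cyclePos a + cycleStep a b := by
  rcases a with i | i <;> rcases b with j | j
  · obtain ⟨-, rfl | rfl⟩ := adj_inl_inl.1 h
    · simp [cycleStep, cyclePos_inl_add_one]
    · simp only [cycleStep, cyclePos_inl_add_one]
      split_ifs with h2
      -- for `n = 2` a backward cycle step is also a forward one
      · conv_lhs => rw [h2]
        simp only [cyclePos_inl_add_one]
        push_cast
        ring
      · push_cast
        ring
  · obtain rfl := adj_inl_inr.1 h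
    simp [cycleStep, cyclePos]
  · obtain rfl := adj_inl_inr.1 h.symm
    simp [cycleStep, cyclePos]
  · exact absurd h (not_adj_inr_inr i j)

lemma whiskerParity_eq_add_cycleStep {a b : Fin n ⊕ Fin n} (h : (whiskerCycle n).Adj a b) :
    whiskerParity b = whiskerParity a + cycleStep a b + 1 := by
  rcases a with i | i <;> rcases b with j | j
  · obtain ⟨-, rfl | rfl⟩ := adj_inl_inl.1 h
    · simp [cycleStep, whiskerParity]
      decide
    · simp only [cycleStep, whiskerParity]
      split_ifs <;> simp <;> decide
  · simp [cycleStep, whiskerParity]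
  · simp [cycleStep, whiskerParity]
    decide
  · exact absurd h (not_adj_inr_inr i j)

def winding (w : ℕ → Fin n ⊕ Fin n) (j : ℕ) : ℤ :=
  ∑ p ∈ Finset.range j, cycleStep (w p) (w (p + 1))

lemma winding_succ (w : ℕ → Fin n ⊕ Fin n) (j : ℕ) :
    winding w (j + 1) = winding w j + cycleStep (w j) (w (j + 1)) :=
  Finset.sum_range_succ _ _

@[simp]
lemma winding_zero (w : ℕ → Fin n ⊕ Fin n) : winding w 0 = 0 := Finset.sum_range_zero _

variable {w : ℕ → Fin n ⊕ Fin n} {L : ℕ}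

lemma cyclePos_eq_add_winding (hw : ∀ j < L, (whiskerCycle n).Adj (w j) (w (j + 1)))
    {j : ℕ} (hj : j ≤ L) : cyclePos (w j) = cyclePos (w 0) + winding w j := by
  induction j with
  | zero => simp
  | succ j ih =>
    rw [cyclePos_eq_add_cycleStep (hw j hj), ih (by omega), winding_succ]
    push_cast
    ring

lemma whiskerParity_eq_add_winding (hw : ∀ j < L, (whiskerCycle n).Adj (w j) (w (j + 1)))
    {j : ℕ} (hj : j ≤ L) : whiskerParity (w j) = whiskerParity (w 0) + winding w j + j := by
  induction j with
  | zero => simp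
  | succ j ih =>
    rw [whiskerParity_eq_add_cycleStep (hw j hj), ih (by omega), winding_succ]
    push_cast
    ring

lemma inl_eq_natCast_of_winding (hw : ∀ j < L, (whiskerCycle n).Adj (w j) (w (j + 1)))
    (h0 : w 0 = .inl ((n - 1 : ℕ) : Fin n)) {j : ℕ} (hj : j ≤ L) {i : Fin n}
    (hwj : w j = .inl i) {c : ℕ} (hc : (winding w j : ZMod n) = c + 1) : i = c := by
  apply inl_eq_natCast_of_cyclePos
  rw [← hwj, cyclePos_eq_add_winding hw hj, h0, cyclePos_inl_natCast, hc,
    Nat.cast_sub NeZero.one_le, ZMod.natCast_self]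
  ring

lemma even_winding_add (hw : ∀ j < L, (whiskerCycle n).Adj (w j) (w (j + 1)))
    {i₀ i : Fin n} (h0 : w 0 = .inl i₀) {j : ℕ} (hj : j ≤ L) (hwj : w j = .inl i) :
    Even (winding w j + j) := by
  have := whiskerParity_eq_add_winding hw hj
  rw [hwj, h0, whiskerParity_inl, whiskerParity_inl, zero_add] at this
  rw [← ZMod.intCast_eq_zero_iff_even]
  push_cast
  linear_combination -this

lemma edge_eq_and_even_iff_of_winding (hw : ∀ j < L, (whiskerCycle n).Adj (w j) (w (j + 1)))
    (h0 : w 0 = .inl ((n - 1 : ℕ) : Fin n)) {j : ℕ} (hj : j < L)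
    (hne : winding w j ≠ winding w (j + 1)) {c c' : ℕ}
    (hc : (winding w j : ZMod n) = c + 1) (hc' : (winding w (j + 1) : ZMod n) = c' + 1) :
    s(w j, w (j + 1)) = s(.inl (c : Fin n), .inl (c' : Fin n)) ∧
      (Even j ↔ Even (winding w j)) := by
  rw [winding_succ, ne_eq, left_eq_add] at hne
  obtain ⟨i, i', hwj, hwj'⟩ := exists_inl_of_cycleStep_ne_zero hne
  refine ⟨?_, ?_⟩
  · rw [hwj, hwj', inl_eq_natCast_of_winding hw h0 hj.le hwj hc,
      inl_eq_natCast_of_winding hw h0 hj hwj' hc']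
  · have := even_winding_add hw h0 hj.le hwj
    rw [Int.even_add, Int.even_coe_nat] at this
    exact this.symm

theorem exists_odd_step_eq_of_le_abs_winding
    (hw : ∀ j < L, (whiskerCycle n).Adj (w j) (w (j + 1)))
    (h0 : w 0 = .inl ((n - 1 : ℕ) : Fin n)) {m : ℕ} (hm : n = 2 * m + 1)
    (hD : (n : ℤ) ≤ |winding w L|) {t : ℕ} (ht : t < m) :
    ∃ j < L, ¬ Even j ∧
      s(w j, w (j + 1)) = s(.inl ((2 * t : ℕ) : Fin n), .inl ((2 * t + 1 : ℕ) : Fin n)) := by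
  have hstep : ∀ j < L, |winding w (j + 1) - winding w j| ≤ 1 := fun j _ => by
    rw [winding_succ, add_sub_cancel_left]
    exact abs_cycleStep_le_one _ _
  have hn : ((2 * m + 1 : ℕ) : ZMod n) = 0 := hm ▸ ZMod.natCast_self n
  push_cast at hn
  rcases le_abs'.1 hD with hD | hD
  · obtain ⟨j, hj, hxj, hxj'⟩ := exists_eq_and_succ_eq_of_le_of_lt (f := fun j => -winding w j)
      (fun j hj => by linarith [abs_le.1 (hstep j hj)]) (x := 2 * m - 2 * t - 1)
      (by simp only [winding_zero]; omega) (by omega)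
    have hj0 : winding w j = 2 * t + 1 - 2 * m := by linarith
    have hj1 : winding w (j + 1) = 2 * t - 2 * m := by linarith
    obtain ⟨hedge, hpar⟩ := edge_eq_and_even_iff_of_winding hw h0 hj
      (c := 2 * t + 1) (c' := 2 * t) (by omega) (by rw [hj0]; push_cast; linear_combination -hn)
      (by rw [hj1]; push_cast; linear_combination -hn)
    refine ⟨j, hj, ?_, hedge.trans Sym2.eq_swap⟩
    rw [hpar, hj0, Int.even_iff]
    omega
  · obtain ⟨j, hj, hj0, hj1⟩ := exists_eq_and_succ_eq_of_le_of_lt (f := winding w)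
      (fun j hj => by linarith [abs_le.1 (hstep j hj)]) (x := 2 * t + 1)
      (by simp only [winding_zero]; omega) (by omega)
    obtain ⟨hedge, hpar⟩ := edge_eq_and_even_iff_of_winding hw h0 hj
      (c := 2 * t) (c' := 2 * t + 1) (by omega) (by rw [hj0]; push_cast; ring)
      (by rw [hj1]; push_cast; ring)
    refine ⟨j, hj, ?_, hedge⟩
    rw [hpar, hj0, Int.even_iff]
    omega

theorem exists_odd_steps_of_closed_walk {k : ℕ}
    (hw : ∀ j < 2 * k + 1, (whiskerCycle n).Adj (w j) (w (j + 1)))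
    (h0 : w 0 = .inl ((n - 1 : ℕ) : Fin n)) (hclosed : w (2 * k + 1) = w 0) :
    ∃ m, n = 2 * m + 1 ∧ ∀ t < m, ∃ j < 2 * k + 1, ¬ Even j ∧
      s(w j, w (j + 1)) = s(.inl ((2 * t : ℕ) : Fin n), .inl ((2 * t + 1 : ℕ) : Fin n)) := by
  have hdvd : n ∣ (winding w (2 * k + 1)).natAbs := by
    have := cyclePos_eq_add_winding hw le_rfl
    rw [hclosed, left_eq_add, ZMod.intCast_zmod_eq_zero_iff_dvd] at this
    exact Int.natCast_dvd.1 this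
  have hodd : Odd (winding w (2 * k + 1)).natAbs := by
    have := whiskerParity_eq_add_winding hw le_rfl
    rw [hclosed, add_assoc, left_eq_add] at this
    have heven : Even (winding w (2 * k + 1) + (2 * k + 1 : ℕ)) := by
      rw [← ZMod.intCast_eq_zero_iff_even]
      exact_mod_cast this
    rw [Int.natAbs_odd, Int.odd_iff]
    rw [Int.even_iff] at heven
    omega
  obtain ⟨m, hm⟩ := hodd.of_dvd_nat hdvd
  refine ⟨m, hm, fun t ht => exists_odd_step_eq_of_le_abs_winding hw h0 hm ?_ ht⟩
  rw [Int.abs_eq_natAbs]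
  exact_mod_cast Nat.le_of_dvd hodd.pos hdvd

lemma nodup_pathMatching {m : ℕ} (h : 2 * m ≤ n) : (pathMatching n m).Nodup := by
  refine (Multiset.nodup_range m).map_on fun t ht t' ht' heq => ?_
  rw [Multiset.mem_range] at ht ht'
  have hval : ∀ c < n, ((c : Fin n) : ℕ) = c := fun c hc => by
    rw [Fin.val_natCast, Nat.mod_eq_of_lt hc]
  rcases Sym2.eq_iff.1 heq with ⟨he, -⟩ | ⟨he, -⟩ <;>
    have := congrArg Fin.val (Sum.inl_injective he) <;>
    rw [hval _ (by omega), hval _ (by omega)] at this <;> omega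

theorem pathMatching_le_of_closed_walk {B R : Multiset (Sym2 (Fin n ⊕ Fin n))}
    (hB : ∀ e ∈ B, e ∈ (whiskerCycle n).edgeSet)
    (hR : ∀ e ∈ R, e ∈ (whiskerCycle n).edgeSet)
    {k : ℕ} (hw : ∀ j < 2 * k + 1, s(w j, w (j + 1)) ∈ if Even j then B else R)
    (h0 : w 0 = .inl ((n - 1 : ℕ) : Fin n)) (hclosed : w (2 * k + 1) = w 0) :
    ∃ m, n = 2 * m + 1 ∧ pathMatching n m ≤ R := by
  have hadj : ∀ j < 2 * k + 1, (whiskerCycle n).Adj (w j) (w (j + 1)) := fun j hj => by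
    have := hw j hj
    split_ifs at this
    exacts [hB _ this, hR _ this]
  obtain ⟨m, hm, hedges⟩ := exists_odd_steps_of_closed_walk hadj h0 hclosed
  refine ⟨m, hm, (Multiset.le_iff_subset (nodup_pathMatching (by omega))).2 fun q hq => ?_⟩
  obtain ⟨t, ht, rfl⟩ := Multiset.mem_map.1 hq
  obtain ⟨j, hj, hodd, he⟩ := hedges t (Multiset.mem_range.1 ht)
  simpa [hodd, he] using hw j hj

end WhiskerCycle

open WhiskerCycle in
/-- if `M` is a minimal generator of `I^s` (a product of `s`
edge-monomials of `W(C_n)`) and `x_n^2 · M ∈ I^{s+1}`, then `n` is odd, say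
`n = 2m+1` with `1 ≤ m ≤ s`, and `M = (x_1x_2)(x_3x_4)⋯(x_{2m-1}x_{2m})·N`
for some `N ∈ I^{s-m}`. -/
theorem xn_sq_mem_structure (K : Type*) [Field K] (n s : ℕ) [NeZero n]
    (hn : 3 ≤ n) (M : MvPolynomial (Fin n ⊕ Fin n) K)
    (hMgen : ∃ e : Fin s → (Fin n ⊕ Fin n) × (Fin n ⊕ Fin n),
      (∀ i, (whiskerCycle n).Adj (e i).1 (e i).2) ∧
      M = ∏ i, X (e i).1 * X (e i).2)
    (h : X (Sum.inl ((n - 1 : ℕ) : Fin n)) ^ 2 * M ∈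
        edgeIdeal K (whiskerCycle n) ^ (s + 1)) :
    ∃ m : ℕ, n = 2 * m + 1 ∧ 1 ≤ m ∧ m ≤ s ∧
      ∃ N ∈ edgeIdeal K (whiskerCycle n) ^ (s - m),
        M = (∏ t ∈ Finset.range m,
          X (Sum.inl ((2 * t : ℕ) : Fin n)) * X (Sum.inl ((2 * t + 1 : ℕ) : Fin n))) * N := by
  obtain ⟨e, he, rfl⟩ := hMgen
  set z : Fin n ⊕ Fin n := .inl ((n - 1 : ℕ) : Fin n)
  set R := Finset.univ.val.map fun i => s((e i).1, (e i).2)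
  have hR : ∀ q ∈ R, q ∈ (whiskerCycle n).edgeSet := by simpa [R] using he
  have hRcard : R.card = s := by simp [R]
  have hM : ∏ i, (X (e i).1 * X (e i).2 : MvPolynomial _ K) =
      ((R.bind Sym2.toMultiset).map X).prod := by
    simp only [R, prod_map_X_bind_toMultiset, Multiset.map_map, Function.comp_def,
      prod_map_X_toMultiset_mk, Finset.prod_eq_multiset_prod]
  rw [hM, ← hRcard] at h
  obtain ⟨B, hB, hBeq⟩ := exists_edges_eq_of_sq_mul_mem_pow h
  obtain ⟨k, w, hw0, hwk, hw⟩ := exists_alternating_walk R B z z hBeq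
  obtain ⟨m, hm, hmR⟩ := pathMatching_le_of_closed_walk hB hR hw hw0 (hwk.trans hw0.symm)
  obtain ⟨T, hT⟩ := Multiset.le_iff_exists_add.1 hmR
  have hcard : m + T.card = s := by
    rw [← hRcard, hT, Multiset.card_add, pathMatching, Multiset.card_map, Multiset.card_range]
  refine ⟨m, hm, by omega, by omega, ((T.bind Sym2.toMultiset).map X).prod, ?_, ?_⟩
  · rw [show s - m = T.card by omega]
    exact prod_mem_edgeIdeal_pow fun q hq => hR q (hT ▸ Multiset.mem_add.2 (Or.inr hq))
  · rw [hM, hT, Multiset.add_bind, Multiset.map_add, Multiset.prod_add]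
    simp only [pathMatching, prod_map_X_bind_toMultiset, Multiset.map_map, Function.comp_def,
      prod_map_X_toMultiset_mk, Finset.prod_eq_multiset_prod, Finset.range_val]
end

section
/- Let G = W(C_n) be the whiskered cycle with n ≥ 3 and let p_0, ..., p_k (k ≥ 1) be a closed walk in G with p_0 = p_k such that the vertices p_0, ..., p_{k-1} are pairwise distinct. Then either k = 2 (the walk traverses an edge back and forth), or k = n and {p_0, ..., p_{k-1}} = {x_1, ..., x_n} (the walk is the cycle C_n). -/
open Function

open Fin.CommRing in
theorem Fin.addOrderOf_one (n : ℕ) [NeZero n] : addOrderOf (1 : Fin n) = n :=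
  CharP.eq (Fin n) (CharP.addOrderOf_one _) (Fin.charP n)

theorem ZMod.two_ne_zero_of_three_le {k : ℕ} (hk : 3 ≤ k) : (2 : ZMod k) ≠ 0 := by
  rw [← Nat.cast_ofNat, Ne, ZMod.natCast_eq_zero_iff]
  exact fun h => absurd (Nat.le_of_dvd two_pos h) (by omega)

section NonBacktracking

variable {G : Type*} [AddCommGroup G] {e : G}

theorem eq_of_add_ne_zero_of_eq_or_eq_neg {s t : G} (hs : s = e ∨ s = -e) (ht : t = e ∨ t = -e)
    (hst : s + t ≠ 0) : s = t := by
  rcases hs with rfl | rfl <;> rcases ht with rfl | rfl <;> simp_all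

theorem eq_add_nsmul_of_nonBacktracking {g : ℕ → G}
    (hstep : ∀ i, g (i + 1) - g i = e ∨ g (i + 1) - g i = -e)
    (hback : ∀ i, g (i + 2) ≠ g i) (i : ℕ) : g i = g 0 + i • (g 1 - g 0) := by
  have hconst : ∀ i, g (i + 1) - g i = g 1 - g 0 := by
    intro i
    induction i with
    | zero => rfl
    | succ i ih =>
      rw [← ih]
      refine eq_of_add_ne_zero_of_eq_or_eq_neg (hstep (i + 1)) (hstep i) fun h => hback i ?_
      rwa [sub_add_sub_cancel, sub_eq_zero] at h
  induction i with
  | zero => simp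
  | succ i ih => rw [succ_nsmul, ← add_assoc, ← ih, ← hconst i, add_sub_cancel]

theorem eq_addOrderOf_of_injective_of_cyclic {k : ℕ} [NeZero k] (hk : 3 ≤ k) {f : ZMod k → G}
    (hf : Injective f) (hstep : ∀ x, f (x + 1) - f x = e ∨ f (x + 1) - f x = -e) :
    k = addOrderOf e := by
  set g : ℕ → G := fun i => f i
  set d := g 1 - g 0
  have hg : ∀ i, g i = g 0 + i • d := by
    refine eq_add_nsmul_of_nonBacktracking (e := e) (fun i => ?_) (fun i h => ?_)
    · simpa [g] using hstep i
    · have := hf h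
      push_cast at this
      exact ZMod.two_ne_zero_of_three_le hk (by simpa using this)
  have hd : addOrderOf d = addOrderOf e := by
    rcases hstep 0 with h | h <;> simp only [zero_add] at h <;> simp [d, g, h]
  rw [← hd]
  -- `g` returns to `g 0` at multiples of `k` (it factors through `ZMod k`, injectively) and at
  -- multiples of `addOrderOf d` (it is a progression with difference `d`).
  apply Nat.dvd_antisymm
  · rw [← ZMod.natCast_eq_zero_iff, ← Nat.cast_zero]
    apply hf
    change g (addOrderOf d) = g 0
    rw [hg (addOrderOf d), addOrderOf_nsmul_eq_zero, add_zero]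
  · apply addOrderOf_dvd_of_nsmul_eq_zero
    have hgk : g k = g 0 := by simp [g]
    rw [hg k, add_eq_left] at hgk
    exact hgk

end NonBacktracking

section CyclicWalk

variable {V : Type*} {G : SimpleGraph V} {k : ℕ} {p : ℕ → V}

theorem apply_succ_mod_of_closed (hclosed : p k = p 0) {m : ℕ} (hm : m < k) :
    p ((m + 1) % k) = p (m + 1) := by
  obtain h | rfl : m + 1 < k ∨ m + 1 = k := by omega
  · rw [Nat.mod_eq_of_lt h]
  · rw [Nat.mod_self, hclosed]

theorem adj_val_add_one_of_closed [NeZero k] (hclosed : p k = p 0)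
    (hadj : ∀ i < k, G.Adj (p i) (p (i + 1))) (x : ZMod k) :
    G.Adj (p x.val) (p (x + 1).val) := by
  rw [ZMod.val_add, ZMod.val_one_eq_one_mod, Nat.add_mod_mod,
    apply_succ_mod_of_closed hclosed x.val_lt]
  exact hadj _ x.val_lt

theorem injective_comp_val [NeZero k] (hinj : ∀ i j, i < k → j < k → p i = p j → i = j) :
    Injective fun x : ZMod k => p x.val :=
  fun x y h => ZMod.val_injective k (hinj _ _ x.val_lt y.val_lt h)

theorem setOf_apply_lt_eq_range_val [NeZero k] :
    {v | ∃ i < k, p i = v} = Set.range fun x : ZMod k => p x.val := by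
  ext v
  constructor
  · rintro ⟨i, hi, rfl⟩
    exact ⟨i, congrArg p (ZMod.val_cast_of_lt hi)⟩
  · rintro ⟨x, rfl⟩
    exact ⟨x.val, x.val_lt, rfl⟩

end CyclicWalk

namespace whiskerCycle

variable {n : ℕ} [NeZero n]

theorem eq_inl_of_adj_inr {j : Fin n} {v : Fin n ⊕ Fin n}
    (h : (whiskerCycle n).Adj (Sum.inr j) v) : v = Sum.inl j := by
  simp_all [whiskerCycle]

theorem sub_eq_one_or_neg_one_of_adj {a b : Fin n}
    (h : (whiskerCycle n).Adj (Sum.inl a) (Sum.inl b)) : b - a = 1 ∨ b - a = -1 := by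
  obtain ⟨-, rfl | rfl⟩ : a ≠ b ∧ (b = a + 1 ∨ a = b + 1) := by
    simpa [whiskerCycle] using h
  · exact Or.inl (add_sub_cancel_left a 1)
  · exact Or.inr (sub_add_cancel_left b 1)

theorem exists_inl_of_cyclic {k : ℕ} (hk : 3 ≤ k) {q : ZMod k → Fin n ⊕ Fin n}
    (hadj : ∀ x, (whiskerCycle n).Adj (q x) (q (x + 1))) (hq : Injective q) (x : ZMod k) :
    ∃ a, q x = Sum.inl a := by
  rcases hx : q x with a | j
  · exact ⟨a, rfl⟩
  · have hprev : q (x - 1) = Sum.inl j :=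
      eq_inl_of_adj_inr (by simpa [hx] using (hadj (x - 1)).symm)
    have hnext : q (x + 1) = Sum.inl j := eq_inl_of_adj_inr (hx ▸ hadj x)
    have h := hq (hprev.trans hnext.symm)
    exact absurd (by linear_combination -h) (ZMod.two_ne_zero_of_three_le hk)

end whiskerCycle

theorem closed_walk_whiskerCycle_general (n : ℕ) [NeZero n]
    (k : ℕ) (hk : 1 ≤ k) (p : ℕ → Fin n ⊕ Fin n) (hclosed : p k = p 0)
    (hadj : ∀ i < k, (whiskerCycle n).Adj (p i) (p (i + 1)))
    (hinj : ∀ i j, i < k → j < k → p i = p j → i = j) :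
    k = 2 ∨ (k = n ∧ {v | ∃ i < k, p i = v} = Set.range Sum.inl) := by
  obtain hk2 | hk3 : k ≤ 2 ∨ 3 ≤ k := by omega
  · have : k ≠ 1 := by
      rintro rfl
      exact (whiskerCycle n).irrefl (hclosed ▸ hadj 0 one_pos)
    omega
  have : NeZero k := ⟨by omega⟩
  set q : ZMod k → Fin n ⊕ Fin n := fun x => p x.val
  have hq_adj : ∀ x, (whiskerCycle n).Adj (q x) (q (x + 1)) :=
    adj_val_add_one_of_closed hclosed hadj
  have hq_inj : Injective q := injective_comp_val hinj
  choose f hf using whiskerCycle.exists_inl_of_cyclic hk3 hq_adj hq_inj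
  have hqf : q = Sum.inl ∘ f := funext hf
  have hf_inj : Injective f := (hqf ▸ hq_inj).of_comp
  have hkn : k = n := by
    rw [eq_addOrderOf_of_injective_of_cyclic hk3 hf_inj fun x =>
      whiskerCycle.sub_eq_one_or_neg_one_of_adj (by simpa [hqf] using hq_adj x), Fin.addOrderOf_one]
  have hf_surj : Surjective f :=
    ((Fintype.bijective_iff_injective_and_card f).2 ⟨hf_inj, by simp [hkn]⟩).2
  refine Or.inr ⟨hkn, ?_⟩
  rw [setOf_apply_lt_eq_range_val]
  change Set.range q = _
  rw [hqf, Set.range_comp, hf_surj.range_eq, Set.image_univ]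

/-- a closed walk `p_0, …, p_k` (`k ≥ 1`, `p_k = p_0`) in
`W(C_n)` whose vertices `p_0, …, p_{k-1}` are pairwise distinct either has
`k = 2` (an edge traversed back and forth) or `k = n` and its vertex set is
exactly the set of cycle vertices `{x_1, …, x_n}`. -/
theorem closed_walk_whiskerCycle (n : ℕ) [NeZero n] (hn : 3 ≤ n)
    (k : ℕ) (hk : 1 ≤ k) (p : ℕ → Fin n ⊕ Fin n) (hclosed : p k = p 0)
    (hadj : ∀ i < k, (whiskerCycle n).Adj (p i) (p (i + 1)))
    (hinj : ∀ i j, i < k → j < k → p i = p j → i = j) :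
    k = 2 ∨ (k = n ∧ {v | ∃ i < k, p i = v} = Set.range Sum.inl) :=
  closed_walk_whiskerCycle_general n k hk p hclosed hadj hinj
end
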